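/- Let p ≥ 1, let S be a p×p real symmetric positive semidefinite matrix, let λ > 0, and let Θ̂ be a graphical lasso solution for S with tuning parameter λ. If the threshold graph of S at level λ is connected, then the estimated graph of Θ̂ is connected; in particular, if λ is strictly below the smallest level at which the threshold graph of S becomes disconnected, then the graphical lasso estimate consists of a single connected component containing all p variables. -/

import Mathlib

open Matrix BigOperators

/-- The graphical lasso objective: log det Θ − tr(SΘ) − λ ∑_{j ≠ j'} |Θ_{jj'}|. -/
noncomputable def glassoObj {n : Type*} [Fintype n] [DecidableEq n]
    (S : Matrix n n ℝ) (lam : ℝ) (Θ : Matrix n n ℝ) : ℝ :=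
  Real.log Θ.det - (S * Θ).trace -
    lam * ∑ j : n, ∑ j' : n, (if j ≠ j' then |Θ j j'| else 0)

/-- A graphical lasso solution: a symmetric positive definite matrix maximizing the
graphical lasso objective over all symmetric positive definite matrices. -/
def IsGlassoSolution {n : Type*} [Fintype n] [DecidableEq n]
    (S : Matrix n n ℝ) (lam : ℝ) (Θhat : Matrix n n ℝ) : Prop :=
  Θhat.IsSymm ∧ Θhat.PosDef ∧
    ∀ Θ : Matrix n n ℝ, Θ.IsSymm → Θ.PosDef →
      glassoObj S lam Θ ≤ glassoObj S lam Θhat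

/-- The threshold graph of S at level λ: edge between distinct j, j' iff |S_{jj'}| > λ. -/
def thresholdGraph {n : Type*} (S : Matrix n n ℝ) (lam : ℝ) : SimpleGraph n :=
  SimpleGraph.fromRel (fun j j' => lam < |S j j'|)

/-- The estimated graph of Θ̂: edge between distinct j, j' iff Θ̂_{jj'} ≠ 0. -/
def estimatedGraph {n : Type*} (Θ : Matrix n n ℝ) : SimpleGraph n :=
  SimpleGraph.fromRel (fun j j' => Θ j j' ≠ 0)

/-!
It suffices that the endpoints of every threshold edge `{a, b}` are reachable in the estimated
graph. If they were not, `Θ̂` would be block diagonal along the components of the estimated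
graph, hence so would `Θ̂⁻¹`; in particular `(Θ̂⁻¹)_{ba} = 0`. For `P = 1 + c Θ̂⁻¹ e_a e_bᵀ` this
makes `det P = 1 + c (Θ̂⁻¹)_{ba} = 1`, so the congruence `Pᵀ Θ̂ P` is again positive definite with
the same determinant, and it differs from `Θ̂` only by `c` at `(a, b)`, `(b, a)` and
`c² (Θ̂⁻¹)_{aa}` at `(b, b)`. The objective thus changes by `-2 c S_{ab} - 2 λ |c| - O(c²)`, which
is positive for small `c` of sign `-sign S_{ab}` because `|S_{ab}| > λ`, contradicting the
maximality of `Θ̂`.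
-/

namespace SimpleGraph

variable {V : Type*} {G G' : SimpleGraph V}

theorem Reachable.mono_of_adj (h : ∀ u v, G.Adj u v → G'.Reachable u v) {u v : V}
    (huv : G.Reachable u v) : G'.Reachable u v := by
  rw [reachable_iff_reflTransGen] at huv ⊢
  exact Relation.reflTransGen_closed
    (fun x y hxy => (reachable_iff_reflTransGen x y).1 (h x y hxy)) _ _ huv

end SimpleGraph

namespace Matrix

theorem vecMulVec_single_single {n R : Type*} [DecidableEq n] [MulZeroClass R] (i j : n)
    (x y : R) : vecMulVec (Pi.single i x) (Pi.single j y) = single i j (x * y) := by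
  ext k l
  simp only [vecMulVec_apply, single_apply, Pi.single_apply]
  split_ifs <;> simp_all

variable {n : Type*} [Fintype n] [DecidableEq n]

section CommRing

variable {R : Type*} [CommRing R]

theorem det_one_add_vecMulVec (x y : n → R) : det (1 + vecMulVec x y) = 1 + y ⬝ᵥ x := by
  rw [vecMulVec_eq Unit, det_one_add_replicateCol_mul_replicateRow]

theorem IsSymm.transpose_one_add_vecMulVec_mul_mul {Θ : Matrix n n R} (hΘ : Θ.IsSymm)
    (x y : n → R) :
    (1 + vecMulVec x y)ᵀ * Θ * (1 + vecMulVec x y) =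
      Θ + vecMulVec y (Θ *ᵥ x) + vecMulVec (Θ *ᵥ x) y + (x ⬝ᵥ Θ *ᵥ x) • vecMulVec y y := by
  have hxΘ : x ᵥ* Θ = Θ *ᵥ x := by rw [← mulVec_transpose, hΘ.eq]
  simp only [transpose_add, transpose_one, transpose_vecMulVec, add_mul, mul_add, one_mul,
    mul_one, vecMulVec_mul, mul_vecMulVec, hxΘ, vecMulVec_mulVec, op_smul_eq_smul,
    smul_vecMulVec, dotProduct_comm (Θ *ᵥ x), add_assoc]

theorem inv_apply_eq_zero_of_ne [NoZeroDivisors R] [CharZero R] {ι : Type*} {Θ : Matrix n n R}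
    (κ : n → ι) (hΘ : ∀ i j, κ i ≠ κ j → Θ i j = 0) {i j : n} (hij : κ i ≠ κ j) :
    Θ⁻¹ i j = 0 := by
  classical
  set D : Matrix n n R := diagonal fun k => if κ k = κ i then 1 else -1
  have hDD : D * D = 1 := by
    rw [diagonal_mul_diagonal, ← diagonal_one]
    congr 1
    ext k
    split_ifs <;> simp
  have hDΘD : D * Θ * D = Θ := by
    ext k l
    rw [mul_diagonal, diagonal_mul]
    by_cases hk : κ k = κ i <;> by_cases hl : κ l = κ i
    · simp [hk, hl]
    · simp [hk, hl, hΘ k l fun h => hl (h.symm.trans hk)]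
    · simp [hk, hl, hΘ k l fun h => hk (h.trans hl)]
    · simp [hk, hl]
  have hinv : Θ⁻¹ = D * Θ⁻¹ * D := by
    conv_lhs => rw [← hDΘD]
    rw [mul_inv_rev, mul_inv_rev, inv_eq_left_inv hDD, ← mul_assoc]
  have hentry := congr_fun₂ hinv i j
  rw [mul_diagonal, diagonal_mul] at hentry
  simpa [Ne.symm hij, CharZero.eq_neg_self_iff] using hentry

end CommRing

end Matrix

variable {n : Type*} [Fintype n] [DecidableEq n]

def offDiagL1 (Θ : Matrix n n ℝ) : ℝ := ∑ j, ∑ j', if j ≠ j' then |Θ j j'| else 0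

theorem glassoObj_eq (S : Matrix n n ℝ) (lam : ℝ) (Θ : Matrix n n ℝ) :
    glassoObj S lam Θ = Real.log Θ.det - (S * Θ).trace - lam * offDiagL1 Θ := rfl

theorem offDiagL1_add {Θ M : Matrix n n ℝ} (h : ∀ i j, i ≠ j → Θ i j = 0 ∨ M i j = 0) :
    offDiagL1 (Θ + M) = offDiagL1 Θ + offDiagL1 M := by
  simp only [offDiagL1, ← Finset.sum_add_distrib]
  refine Finset.sum_congr rfl fun i _ => Finset.sum_congr rfl fun j _ => ?_
  split_ifs with hij
  · rcases h i j hij with h0 | h0 <;> simp [h0]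
  · simp

theorem offDiagL1_single (i j : n) (c : ℝ) :
    offDiagL1 (single i j c) = if i ≠ j then |c| else 0 := by
  rw [offDiagL1, Finset.sum_eq_single i (fun k _ hk => ?_) (by simp),
    Finset.sum_eq_single j (fun l _ hl => ?_) (by simp)]
  · simp
  · simp [hl.symm]
  · exact Finset.sum_eq_zero fun l _ => by simp [hk.symm]

noncomputable def crossPerturb (Θ : Matrix n n ℝ) (a b : n) (c : ℝ) : Matrix n n ℝ :=
  Θ + single b a c + single a b c + single b b (c ^ 2 * Θ⁻¹ a a)

section crossPerturb

variable {Θ : Matrix n n ℝ} {a b : n}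

theorem crossPerturb_eq_transpose_mul_mul (hΘ : Θ.PosDef) (c : ℝ) :
    crossPerturb Θ a b c =
      (1 + vecMulVec (Θ⁻¹ *ᵥ Pi.single a c) (Pi.single b 1))ᵀ * Θ *
        (1 + vecMulVec (Θ⁻¹ *ᵥ Pi.single a c) (Pi.single b 1)) := by
  have hΘx : Θ *ᵥ (Θ⁻¹ *ᵥ Pi.single a c) = Pi.single a c := by
    rw [mulVec_mulVec, mul_nonsing_inv _ hΘ.det_pos.ne'.isUnit, one_mulVec]
  rw [(isHermitian_iff_isSymm.mp hΘ.1).transpose_one_add_vecMulVec_mul_mul, hΘx,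
    dotProduct_single]
  simp only [vecMulVec_single_single, smul_single, crossPerturb, mulVec, dotProduct_single]
  ring_nf

theorem det_one_add_vecMulVec_inv_mulVec_single (hinv : Θ⁻¹ b a = 0) (c : ℝ) :
    det (1 + vecMulVec (Θ⁻¹ *ᵥ Pi.single a c) (Pi.single b 1)) = 1 := by
  rw [det_one_add_vecMulVec, single_one_dotProduct]
  simp [mulVec, dotProduct_single, hinv]

theorem Matrix.PosDef.crossPerturb (hΘ : Θ.PosDef) (hinv : Θ⁻¹ b a = 0) (c : ℝ) :
    (crossPerturb Θ a b c).PosDef := by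
  rw [crossPerturb_eq_transpose_mul_mul hΘ, ← conjTranspose_eq_transpose_of_trivial]
  refine hΘ.conjTranspose_mul_mul_same (mulVec_injective_of_isUnit ?_)
  rw [isUnit_iff_isUnit_det, det_one_add_vecMulVec_inv_mulVec_single hinv]
  exact isUnit_one

theorem det_crossPerturb (hΘ : Θ.PosDef) (hinv : Θ⁻¹ b a = 0) (c : ℝ) :
    (crossPerturb Θ a b c).det = Θ.det := by
  rw [crossPerturb_eq_transpose_mul_mul hΘ, det_mul, det_mul, det_transpose,
    det_one_add_vecMulVec_inv_mulVec_single hinv, one_mul, mul_one]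

theorem trace_mul_crossPerturb {S : Matrix n n ℝ} (hS : S.IsSymm) (c : ℝ) :
    (S * crossPerturb Θ a b c).trace =
      (S * Θ).trace + 2 * c * S a b + c ^ 2 * Θ⁻¹ a a * S b b := by
  simp only [crossPerturb, mul_add, trace_add, trace_mul_single, op_smul_eq_smul, smul_eq_mul,
    hS.apply a b]
  ring

theorem offDiagL1_crossPerturb (hab : a ≠ b) (hΘab : Θ a b = 0) (hΘba : Θ b a = 0) (c : ℝ) :
    offDiagL1 (crossPerturb Θ a b c) = offDiagL1 Θ + 2 * |c| := by
  rw [crossPerturb, offDiagL1_add, offDiagL1_add, offDiagL1_add, offDiagL1_single,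
    offDiagL1_single, offDiagL1_single]
  · simp [hab, hab.symm]
    ring
  all_goals
    intro i j hij
    simp only [Matrix.add_apply, single_apply]
    grind

theorem glassoObj_crossPerturb {S : Matrix n n ℝ} (hS : S.IsSymm) (lam : ℝ) (hΘ : Θ.PosDef)
    (hab : a ≠ b) (hΘab : Θ a b = 0) (hinv : Θ⁻¹ b a = 0) (c : ℝ) :
    glassoObj S lam (crossPerturb Θ a b c) =
      glassoObj S lam Θ - (2 * c * S a b + c ^ 2 * (Θ⁻¹ a a * S b b) + 2 * lam * |c|) := by
  rw [glassoObj_eq, glassoObj_eq, det_crossPerturb hΘ hinv, trace_mul_crossPerturb hS,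
    offDiagL1_crossPerturb hab hΘab ((isHermitian_iff_isSymm.mp hΘ.1).apply a b ▸ hΘab)]
  ring

end crossPerturb

namespace IsGlassoSolution

variable {S Θ : Matrix n n ℝ} {lam : ℝ}

theorem abs_le_of_inv_apply_eq_zero (hsol : IsGlassoSolution S lam Θ) (hS : S.IsSymm)
    {a b : n} (hab : a ≠ b) (hΘab : Θ a b = 0) (hinv : Θ⁻¹ b a = 0) : |S a b| ≤ lam := by
  obtain ⟨-, hΘ, hmax⟩ := hsol
  by_contra! hlt
  obtain ⟨σ, hσ, hσS⟩ : ∃ σ : ℝ, |σ| = 1 ∧ σ * S a b = |S a b| := by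
    rcases le_total 0 (S a b) with h | h
    · exact ⟨1, by simp, by simp [abs_of_nonneg h]⟩
    · exact ⟨-1, by simp, by simp [abs_of_nonpos h]⟩
  set q := Θ⁻¹ a a * S b b
  set ε := |S a b| - lam
  have hε : 0 < ε := sub_pos.mpr hlt
  set t := ε / (|q| + 1)
  have ht : 0 < t := by positivity
  have htq : t * q < ε := by
    have : t * (|q| + 1) = ε := div_mul_cancel₀ ε (by positivity)
    nlinarith [le_abs_self q]
  have hPD := hΘ.crossPerturb hinv (-(σ * t))
  have hle := hmax _ (isHermitian_iff_isSymm.mp hPD.1) hPD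
  rw [glassoObj_crossPerturb hS lam hΘ hab hΘab hinv] at hle
  have habs : |-(σ * t)| = t := by rw [abs_neg, abs_mul, hσ, one_mul, abs_of_pos ht]
  have hσ2 : σ ^ 2 = 1 := by rw [← sq_abs, hσ, one_pow]
  have hchange :
      2 * -(σ * t) * S a b + (-(σ * t)) ^ 2 * q + 2 * lam * t = -(t * (2 * ε - t * q)) := by
    linear_combination (-2 * t) * hσS + t ^ 2 * q * hσ2
  rw [habs, hchange] at hle
  nlinarith [mul_pos ht (by linarith : 0 < 2 * ε - t * q)]

theorem reachable_of_thresholdGraph_adj (hsol : IsGlassoSolution S lam Θ) (hS : S.IsSymm)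
    {a b : n} (hadj : (thresholdGraph S lam).Adj a b) : (estimatedGraph Θ).Reachable a b := by
  classical
  by_contra hab
  set κ := (estimatedGraph Θ).connectedComponentMk
  have hblock : ∀ i j, κ i ≠ κ j → Θ i j = 0 := fun i j hij => by
    by_contra h0
    have hne : i ≠ j := fun h => hij (congrArg κ h)
    exact hij (SimpleGraph.ConnectedComponent.eq.mpr
      (SimpleGraph.Adj.reachable ((SimpleGraph.fromRel_adj ..).mpr ⟨hne, Or.inl h0⟩)))
  have hκ : κ a ≠ κ b := fun h => hab (SimpleGraph.ConnectedComponent.eq.mp h)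
  obtain ⟨hne, hlt⟩ := (SimpleGraph.fromRel_adj ..).mp hadj
  have hlt : lam < |S a b| := hlt.elim id (hS.apply a b ▸ ·)
  exact (hsol.abs_le_of_inv_apply_eq_zero hS hne (hblock a b hκ)
    (Matrix.inv_apply_eq_zero_of_ne κ hblock hκ.symm)).not_gt hlt

end IsGlassoSolution

theorem glasso_connected_of_threshold_connected_general
    {p : ℕ}
    (S : Matrix (Fin p) (Fin p) ℝ) (hSsymm : S.IsSymm)
    (lam : ℝ)
    (Θhat : Matrix (Fin p) (Fin p) ℝ) (hΘhat : IsGlassoSolution S lam Θhat)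
    (hconn : (thresholdGraph S lam).Connected) :
    (estimatedGraph Θhat).Connected ∧
      ∀ j j' : Fin p, (estimatedGraph Θhat).Reachable j j' := by
  have hreach : ∀ j j', (estimatedGraph Θhat).Reachable j j' := fun j j' =>
    (hconn.preconnected j j').mono_of_adj fun _ _ =>
      hΘhat.reachable_of_thresholdGraph_adj hSsymm
  have := hconn.nonempty
  exact ⟨⟨hreach⟩, hreach⟩

/-- if the threshold graph of S at level λ is connected, then the estimated graph
of any graphical lasso solution with tuning parameter λ is connected; in particular the
graphical lasso estimate then consists of a single connected component containing all p
variables. -/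
theorem glasso_connected_of_threshold_connected
    {p : ℕ} (hp : 1 ≤ p)
    (S : Matrix (Fin p) (Fin p) ℝ) (hSsymm : S.IsSymm) (hSpsd : S.PosSemidef)
    (lam : ℝ) (hlam : 0 < lam)
    (Θhat : Matrix (Fin p) (Fin p) ℝ) (hΘhat : IsGlassoSolution S lam Θhat)
    (hconn : (thresholdGraph S lam).Connected) :
    (estimatedGraph Θhat).Connected ∧
      ∀ j j' : Fin p, (estimatedGraph Θhat).Reachable j j' :=
  glasso_connected_of_threshold_connected_general S hSsymm lam Θhat hΘhat hconn
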